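/- For the independent uniform hashing rank variables r_1,...,r_n, E((r_1 + ... + r_n)^2) = (n+1)^2·(H_n^2 − H_n^{(2)}) − (n+1)(2n+1)·H_n + n(3n+4). -/

import Mathlib

/-!
Under the product distribution, `E[(∑ X_k)²] = (∑ E X_k)² + ∑ Var X_k`, so only the first two
moments of each rank are needed, and by summation by parts these are sums of the tail
`q_j = C(k,j)/C(n,j)` of the rank of trader `k + 1`. The tail satisfies
`(n - j) q_{j+1} = (k - j) q_j`, which makes `(n - k + 1) q_j` and `(n - k + 2)(n + 1 - j) q_j`
telescoping differences, giving `∑ q_j = (n+1)/(n-k+1)` and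
`∑ (n + 1 - j) q_j = (n+1)(n+2)/(n-k+2)`. Summing these over `k` produces the harmonic numbers.
-/

/-- `q n k j = C(k-1,j)/C(n,j)`, the probability that rank `r_k` exceeds `j`
in uniform hashing on a table of size `n`. -/
def hashTail (n k j : ℕ) : ℚ := (Nat.choose (k - 1) j : ℚ) / (Nat.choose n j : ℚ)

open Finset

section IndependentSum

variable {ι α R : Type*} [Fintype ι] [DecidableEq ι] [Fintype α] [CommRing R]

theorem sum_prod_mul_prod_eq_prod_sum (p g : ι → α → R) :
    ∑ r : ι → α, (∏ i, p i (r i)) * ∏ i, g i (r i) = ∏ i, ∑ a, p i a * g i a := by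
  simp only [Fintype.prod_sum, ← prod_mul_distrib]

theorem sum_prod_mul_mul_eq (p : ι → α → R) (hp : ∀ i, ∑ a, p i a = 1) (f : ι → α → R)
    (k l : ι) :
    ∑ r : ι → α, (∏ i, p i (r i)) * (f k (r k) * f l (r l)) =
      (∑ a, p k a * f k a) * (∑ a, p l a * f l a) +
        if k = l then ∑ a, p k a * f k a ^ 2 - (∑ a, p k a * f k a) ^ 2 else 0 := by
  let g : ι → α → R := fun i a => (if i = k then f k a else 1) * (if i = l then f l a else 1)
  have hprod : ∀ r : ι → α, f k (r k) * f l (r l) = ∏ i, g i (r i) := by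
    intro r
    simp only [g, prod_mul_distrib, prod_ite_eq' univ k, prod_ite_eq' univ l, if_pos (mem_univ _)]
  simp_rw [hprod, sum_prod_mul_prod_eq_prod_sum]
  split_ifs with hkl
  · subst hkl
    rw [prod_eq_single k (fun i _ hi => by simp [g, hi, hp]) (by simp)]
    simp [g, sq]
  · have hfactor : ∀ i, ∑ a, p i a * g i a =
        (if i = k then ∑ a, p k a * f k a else 1) * (if i = l then ∑ a, p l a * f l a else 1) := by
      intro i
      by_cases hik : i = k
      · subst hik; simp [g, hkl]
      · by_cases hil : i = l
        · subst hil; simp [g, hik]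
        · simp [g, hik, hil, hp]
    simp_rw [hfactor, prod_mul_distrib, prod_ite_eq' univ k, prod_ite_eq' univ l,
      if_pos (mem_univ _)]
    ring

theorem sum_prod_mul_sq_sum_eq (p : ι → α → R) (hp : ∀ i, ∑ a, p i a = 1) (f : ι → α → R) :
    ∑ r : ι → α, (∏ i, p i (r i)) * (∑ i, f i (r i)) ^ 2 =
      (∑ i, ∑ a, p i a * f i a) ^ 2 +
        ∑ i, (∑ a, p i a * f i a ^ 2 - (∑ a, p i a * f i a) ^ 2) := by
  simp_rw [sq (∑ i, f i _), sum_mul_sum, mul_sum]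
  rw [sum_comm]
  simp_rw [sum_comm (γ := ι → α), sum_prod_mul_mul_eq p hp f, sum_add_distrib, sum_ite_eq,
    if_pos (mem_univ _), ← sum_mul_sum, sq]

end IndependentSum

theorem sum_range_sub_mul_eq {R : Type*} [CommRing R] (q g : ℕ → R) (n : ℕ) :
    ∑ j ∈ range n, (q j - q (j + 1)) * g (j + 1) =
      ∑ j ∈ range n, q j * (g (j + 1) - g j) + q 0 * g 0 - q n * g n := by
  induction n with
  | zero => simp
  | succ n ih => rw [sum_range_succ, sum_range_succ, ih]; ring

theorem Nat.cast_choose_succ_mul {R : Type*} [Ring R] (m j : ℕ) :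
    (m.choose (j + 1) : R) * (j + 1) = m.choose j * ((m : R) - j) := by
  rcases le_or_gt j m with hj | hj
  · rw [← Nat.cast_sub hj]
    exact_mod_cast congrArg (Nat.cast : ℕ → R) (m.choose_succ_right_eq j)
  · simp [Nat.choose_eq_zero_of_lt hj, Nat.choose_eq_zero_of_lt (hj.trans (Nat.lt_succ_self j))]

-- `E r_{k+1}` and `E r_{k+1}²`, for `k < n`
def rankMean (n k : ℕ) : ℚ := (n + 1) / ((n : ℚ) - k + 1)

def rankSecondMoment (n k : ℕ) : ℚ :=
  (2 * n + 3) * (n + 1) / ((n : ℚ) - k + 1) - 2 * (n + 1) * (n + 2) / ((n : ℚ) - k + 2)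

namespace hashTail

theorem succ_zero (n k : ℕ) : hashTail n (k + 1) 0 = 1 := by simp [hashTail]

theorem succ_self {n k : ℕ} (hk : k < n) : hashTail n (k + 1) n = 0 := by
  simp [hashTail, Nat.choose_eq_zero_of_lt hk]

theorem sub_mul_succ {n j : ℕ} (k : ℕ) (hj : j < n) :
    ((n : ℚ) - j) * hashTail n (k + 1) (j + 1) = ((k : ℚ) - j) * hashTail n (k + 1) j := by
  have hn := Nat.cast_choose_succ_mul (R := ℚ) n j
  have hk := Nat.cast_choose_succ_mul (R := ℚ) k j
  have h0 : (n.choose j : ℚ) ≠ 0 := by exact_mod_cast (Nat.choose_pos hj.le).ne'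
  have h1 : (n.choose (j + 1) : ℚ) ≠ 0 := by exact_mod_cast (Nat.choose_pos hj).ne'
  simp only [hashTail, Nat.add_sub_cancel, mul_div_assoc', div_eq_div_iff h1 h0]
  refine mul_right_cancel₀ (Nat.cast_add_one_ne_zero j) ?_
  linear_combination ((n : ℚ) - j) * n.choose j * hk - ((k : ℚ) - j) * k.choose j * hn

theorem sum_sub_succ {n k : ℕ} (hk : k < n) :
    ∑ j ∈ range n, (hashTail n (k + 1) j - hashTail n (k + 1) (j + 1)) = 1 := by
  rw [sum_range_sub', succ_zero, succ_self hk, sub_zero]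

theorem sum_range_eq {n k : ℕ} (hk : k < n) :
    ∑ j ∈ range n, hashTail n (k + 1) j = (n + 1) / ((n : ℚ) - k + 1) := by
  have hstep : ∀ j ∈ range n, ((n : ℚ) - k + 1) * hashTail n (k + 1) j =
      ((n : ℚ) + 1 - j) * hashTail n (k + 1) j -
        ((n : ℚ) + 1 - (j + 1 : ℕ)) * hashTail n (k + 1) (j + 1) := by
    intro j hj
    push_cast
    linear_combination sub_mul_succ k (mem_range.mp hj)
  have hk' : (k : ℚ) < n := by exact_mod_cast hk
  rw [eq_div_iff (by linarith), mul_comm, Finset.mul_sum, sum_congr rfl hstep,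
    sum_range_sub' (fun j => ((n : ℚ) + 1 - j) * hashTail n (k + 1) j), succ_zero, succ_self hk]
  simp

theorem sum_range_mul_eq {n k : ℕ} (hk : k < n) :
    ∑ j ∈ range n, ((n : ℚ) + 1 - j) * hashTail n (k + 1) j =
      (n + 1) * (n + 2) / ((n : ℚ) - k + 2) := by
  have hstep : ∀ j ∈ range n, ((n : ℚ) - k + 2) * (((n : ℚ) + 1 - j) * hashTail n (k + 1) j) =
      ((n : ℚ) + 1 - j) * ((n : ℚ) + 2 - j) * hashTail n (k + 1) j -
        ((n : ℚ) + 1 - (j + 1 : ℕ)) * ((n : ℚ) + 2 - (j + 1 : ℕ)) * hashTail n (k + 1) (j + 1) := by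
    intro j hj
    push_cast
    linear_combination ((n : ℚ) + 1 - j) * sub_mul_succ k (mem_range.mp hj)
  have hk' : (k : ℚ) < n := by exact_mod_cast hk
  rw [eq_div_iff (by linarith), mul_comm, Finset.mul_sum, sum_congr rfl hstep,
    sum_range_sub' (fun j => ((n : ℚ) + 1 - j) * ((n : ℚ) + 2 - j) * hashTail n (k + 1) j),
    succ_zero, succ_self hk]
  simp

theorem sum_sub_succ_mul_eq_rankMean {n k : ℕ} (hk : k < n) :
    ∑ j ∈ range n, (hashTail n (k + 1) j - hashTail n (k + 1) (j + 1)) * ((j : ℚ) + 1) =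
      rankMean n k := by
  have h := sum_range_sub_mul_eq (hashTail n (k + 1)) (fun j => (j : ℚ)) n
  push_cast at h
  simp [h, succ_self hk, sum_range_eq hk, rankMean]

theorem sum_sub_succ_mul_sq_eq_rankSecondMoment {n k : ℕ} (hk : k < n) :
    ∑ j ∈ range n, (hashTail n (k + 1) j - hashTail n (k + 1) (j + 1)) * ((j : ℚ) + 1) ^ 2 =
      rankSecondMoment n k := by
  have h := sum_range_sub_mul_eq (hashTail n (k + 1)) (fun j => (j : ℚ) ^ 2) n
  have hweight : ∀ j ∈ range n, hashTail n (k + 1) j * (((j : ℚ) + 1) ^ 2 - (j : ℚ) ^ 2) =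
      (2 * n + 3) * hashTail n (k + 1) j - 2 * (((n : ℚ) + 1 - j) * hashTail n (k + 1) j) :=
    fun j _ => by ring
  push_cast at h
  rw [h, sum_congr rfl hweight, sum_sub_distrib, ← Finset.mul_sum, ← Finset.mul_sum,
    sum_range_eq hk, sum_range_mul_eq hk, succ_self hk, rankSecondMoment]
  ring

end hashTail

theorem Fin.sum_univ_comp_sub {R M : Type*} [AddGroupWithOne R] [AddCommMonoid M] (φ : R → M)
    (n : ℕ) : ∑ k : Fin n, φ ((n : R) - k) = ∑ t ∈ Icc 1 n, φ t := by
  induction n with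
  | zero => simp
  | succ n ih =>
    rw [Fin.sum_univ_succ, sum_Icc_succ_top (by omega), ← ih, add_comm]
    simp [add_sub_add_right_eq_sub]

theorem Finset.sum_Icc_one_comp_succ {M : Type*} [AddCommGroup M] (ψ : ℕ → M) (n : ℕ) :
    ∑ t ∈ Icc 1 n, ψ (t + 1) = ∑ t ∈ Icc 1 n, ψ t + ψ (n + 1) - ψ 1 := by
  induction n with
  | zero => simp
  | succ n ih => rw [sum_Icc_succ_top (by omega), sum_Icc_succ_top (by omega), ih]; abel

theorem sum_Icc_one_div_add_one (n : ℕ) :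
    ∑ t ∈ Icc 1 n, 1 / ((t : ℚ) + 1) = ∑ j ∈ Icc 1 n, 1 / (j : ℚ) + 1 / (n + 1) - 1 := by
  simpa using sum_Icc_one_comp_succ (fun t => 1 / (t : ℚ)) n

theorem sum_Icc_one_div_add_two (n : ℕ) :
    ∑ t ∈ Icc 1 n, 1 / ((t : ℚ) + 2) =
      ∑ j ∈ Icc 1 n, 1 / (j : ℚ) + 1 / (n + 1) + 1 / (n + 2) - 3 / 2 := by
  have h := sum_Icc_one_comp_succ (fun t => 1 / ((t : ℚ) + 1)) n
  push_cast at h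
  simp only [add_assoc, one_add_one_eq_two] at h
  rw [h, sum_Icc_one_div_add_one]
  ring

theorem sum_Icc_one_div_add_one_sq (n : ℕ) :
    ∑ t ∈ Icc 1 n, 1 / ((t : ℚ) + 1) ^ 2 =
      ∑ j ∈ Icc 1 n, 1 / (j : ℚ) ^ 2 + 1 / ((n : ℚ) + 1) ^ 2 - 1 := by
  have h := sum_Icc_one_comp_succ (fun t => 1 / (t : ℚ) ^ 2) n
  push_cast at h
  rwa [one_pow, div_one] at h

theorem sq_sum_rankMean_add_sum_variance (n : ℕ) :
    (∑ k : Fin n, rankMean n k) ^ 2 + ∑ k : Fin n, (rankSecondMoment n k - rankMean n k ^ 2) =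
      ((n : ℚ) + 1) ^ 2 *
          ((∑ j ∈ Icc 1 n, 1 / (j : ℚ)) ^ 2 - ∑ j ∈ Icc 1 n, 1 / (j : ℚ) ^ 2) -
        ((n : ℚ) + 1) * (2 * n + 1) * ∑ j ∈ Icc 1 n, 1 / (j : ℚ) + n * (3 * n + 4) := by
  have hA := Fin.sum_univ_comp_sub (fun y : ℚ => 1 / (y + 1)) n
  have hB := Fin.sum_univ_comp_sub (fun y : ℚ => 1 / (y + 2)) n
  have hC := Fin.sum_univ_comp_sub (fun y : ℚ => 1 / (y + 1) ^ 2) n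
  calc _ = (((n : ℚ) + 1) * ∑ k : Fin n, 1 / ((n : ℚ) - k + 1)) ^ 2 +
        ((2 * n + 3) * (n + 1) * ∑ k : Fin n, 1 / ((n : ℚ) - k + 1) -
          2 * (n + 1) * (n + 2) * ∑ k : Fin n, 1 / ((n : ℚ) - k + 2) -
          (n + 1) ^ 2 * ∑ k : Fin n, 1 / ((n : ℚ) - k + 1) ^ 2) := by
        simp only [rankMean, rankSecondMoment, Finset.mul_sum, ← sum_sub_distrib]
        congr 1
        · exact congrArg (· ^ 2) (sum_congr rfl fun _ _ => by ring)
        · exact sum_congr rfl fun _ _ => by rw [div_pow]; ring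
    _ = _ := by
      rw [hA, hB, hC, sum_Icc_one_div_add_one, sum_Icc_one_div_add_two, sum_Icc_one_div_add_one_sq]
      field_simp
      ring

theorem expected_square_of_rank_sum_general (n : ℕ) :
    (∑ r : Fin n → Fin n,
        (∏ k : Fin n,
            (hashTail n (k.1 + 1) (r k).1 - hashTail n (k.1 + 1) ((r k).1 + 1))) *
          (∑ k : Fin n, ((r k).1 + 1 : ℚ)) ^ 2) =
      ((n : ℚ) + 1) ^ 2 *
          ((∑ j ∈ Finset.Icc 1 n, (1 : ℚ) / (j : ℚ)) ^ 2 -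
            ∑ j ∈ Finset.Icc 1 n, (1 : ℚ) / ((j : ℚ) ^ 2)) -
        ((n : ℚ) + 1) * (2 * (n : ℚ) + 1) * (∑ j ∈ Finset.Icc 1 n, (1 : ℚ) / (j : ℚ)) +
        (n : ℚ) * (3 * (n : ℚ) + 4) := by
  set q : ℕ → ℕ → ℚ := fun k => hashTail n (k + 1)
  have hsum : ∀ k : Fin n, ∑ j : Fin n, (q k j - q k (j + 1)) = 1 := fun k =>
    (Fin.sum_univ_eq_sum_range (fun j => q k j - q k (j + 1)) n).trans
      (hashTail.sum_sub_succ k.isLt)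
  have hmean : ∀ k : Fin n, ∑ j : Fin n, (q k j - q k (j + 1)) * ((j : ℚ) + 1) =
      rankMean n k := fun k =>
    (Fin.sum_univ_eq_sum_range (fun j => (q k j - q k (j + 1)) * ((j : ℚ) + 1)) n).trans
      (hashTail.sum_sub_succ_mul_eq_rankMean k.isLt)
  have hsecond : ∀ k : Fin n, ∑ j : Fin n, (q k j - q k (j + 1)) * ((j : ℚ) + 1) ^ 2 =
      rankSecondMoment n k := fun k =>
    (Fin.sum_univ_eq_sum_range (fun j => (q k j - q k (j + 1)) * ((j : ℚ) + 1) ^ 2) n).trans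
      (hashTail.sum_sub_succ_mul_sq_eq_rankSecondMoment k.isLt)
  rw [sum_prod_mul_sq_sum_eq (fun k j : Fin n => q k j - q k (j + 1)) hsum
    (fun _ j : Fin n => (j : ℚ) + 1)]
  simp only [hmean, hsecond]
  exact sq_sum_rankMean_add_sum_variance n

/-- The expectation of `(r_1 + ⋯ + r_n)²` over the joint (independent) distribution,
where trader `k+1` gets rank `r k + 1` with probability `q_{k,j-1} - q_{k,j}`. -/
theorem expected_square_of_rank_sum (n : ℕ) (hn : 1 ≤ n) :
    (∑ r : Fin n → Fin n,
        (∏ k : Fin n,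
            (hashTail n (k.1 + 1) (r k).1 - hashTail n (k.1 + 1) ((r k).1 + 1))) *
          (∑ k : Fin n, ((r k).1 + 1 : ℚ)) ^ 2) =
      ((n : ℚ) + 1) ^ 2 *
          ((∑ j ∈ Finset.Icc 1 n, (1 : ℚ) / (j : ℚ)) ^ 2 -
            ∑ j ∈ Finset.Icc 1 n, (1 : ℚ) / ((j : ℚ) ^ 2)) -
        ((n : ℚ) + 1) * (2 * (n : ℚ) + 1) * (∑ j ∈ Finset.Icc 1 n, (1 : ℚ) / (j : ℚ)) +
        (n : ℚ) * (3 * (n : ℚ) + 4) :=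
  expected_square_of_rank_sum_general n
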